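/- arXiv:math/9912007 — 5 statements merged into one kernel-verified Lean document; each statement's English description precedes it below -/
import Mathlib

section
/- The function V₁(x₁, x₂) = 2|x₁| + 2|x₂| witnesses the gain γ = 1 for the system ẋ₁ = |x₁|(-x₁ + |x₂| + u₁), ẋ₂ = x₂(-x₁ - |x₂| + u₂): for all x ∈ ℝ² \ {0}, all u ∈ ℝ², and all viscosity subgradients ζ ∈ ∂_D V₁(x), one has ζ · F(x,u) ≤ -|x|² + |u|², where F(x,u) = (|x₁|(-x₁ + |x₂| + u₁), x₂(-x₁ - |x₂| + u₂)) and |·| denotes the Euclidean norm. -/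
open Topology Filter

/-- The viscosity subdifferential of `V : ℝ² → ℝ` at `x`: the set of `ζ` such that
`liminf_{h→0} (V(x+h) - V(x) - ζ·h)/|h| ≥ 0` (with `|·|` the Euclidean norm). -/
def viscositySubdiff2 (V : ℝ × ℝ → ℝ) (x : ℝ × ℝ) : Set (ℝ × ℝ) :=
  {ζ | ∀ ε > (0 : ℝ), ∀ᶠ h in 𝓝[≠] (0 : ℝ × ℝ),
      V (x + h) - V x - (ζ.1 * h.1 + ζ.2 * h.2) ≥ -ε * Real.sqrt (h.1 ^ 2 + h.2 ^ 2)}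

/-- The closed-loop vector field of system `Σ₁`. -/
def F₁ (x u : ℝ × ℝ) : ℝ × ℝ :=
  (|x.1| * (-x.1 + |x.2| + u.1), x.2 * (-x.1 - |x.2| + u.2))

/-!
Along a coordinate direction `±eᵢ` with `xᵢ ≠ 0`, `V₁` is affine near `x` with slope
`±2 sign xᵢ`, and testing the subgradient inequality along `eᵢ` and `-eᵢ` forces
`ζᵢ = 2 sign xᵢ`. Hence `ζ₁ |x₁| = 2 x₁` and `ζ₂ x₂ = 2 |x₂|` whatever the signs, so
`ζ · F₁(x, u) = -2 x₁² - 2 x₂² + 2 x₁ u₁ + 2 |x₂| u₂`, and `2ab ≤ a² + b²` finishes.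
-/

lemma tendsto_smul_nhdsGT_nhdsNE {v : ℝ × ℝ} (hv : v ≠ 0) :
    Tendsto (fun t : ℝ => t • v) (𝓝[>] (0 : ℝ)) (𝓝[≠] 0) := by
  refine tendsto_nhdsWithin_of_tendsto_nhds_of_eventually_within _ ?_ ?_
  · simpa using ((tendsto_id (x := 𝓝 (0 : ℝ))).smul_const v).mono_left nhdsWithin_le_nhds
  · filter_upwards [self_mem_nhdsWithin] with t ht
    exact smul_ne_zero (ne_of_gt ht) hv

lemma mul_add_mul_le_of_mem_viscositySubdiff2 {V : ℝ × ℝ → ℝ} {x ζ v : ℝ × ℝ} {c : ℝ}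
    (hζ : ζ ∈ viscositySubdiff2 V x) (hv : v ≠ 0)
    (hV : ∀ᶠ t in 𝓝[>] (0 : ℝ), V (x + t • v) - V x = c * t) :
    ζ.1 * v.1 + ζ.2 * v.2 ≤ c := by
  set N := Real.sqrt (v.1 ^ 2 + v.2 ^ 2)
  have hN : 0 < N := by
    have hv' : v.1 ≠ 0 ∨ v.2 ≠ 0 := by
      contrapose! hv
      exact Prod.ext hv.1 hv.2
    refine Real.sqrt_pos.2 ?_
    rcases hv' with h | h <;> positivity
  by_contra! hlt
  set d := ζ.1 * v.1 + ζ.2 * v.2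
  have hε : 0 < (d - c) / (2 * N) := by positivity
  obtain ⟨t, hζt, hVt, ht⟩ :=
    (((tendsto_smul_nhdsGT_nhdsNE hv).eventually (hζ _ hε)).and
      (hV.and self_mem_nhdsWithin)).exists
  have ht : 0 < t := ht
  have hnorm : Real.sqrt ((t * v.1) ^ 2 + (t * v.2) ^ 2) = t * N := by
    rw [show (t * v.1) ^ 2 + (t * v.2) ^ 2 = t ^ 2 * (v.1 ^ 2 + v.2 ^ 2) by ring,
      Real.sqrt_mul (sq_nonneg t), Real.sqrt_sq ht.le]
  simp only [Prod.smul_fst, Prod.smul_snd, smul_eq_mul, hnorm, hVt] at hζt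
  have : (d - c) / (2 * N) * (t * N) = (d - c) / 2 * t := by field_simp
  nlinarith

lemma eventually_abs_add_mul_sub_abs {a : ℝ} (ha : a ≠ 0) (s : ℝ) :
    ∀ᶠ t in 𝓝 (0 : ℝ), |a + t * s| - |a| = SignType.sign a * s * t := by
  have hlim : Tendsto (fun t : ℝ => a + t * s) (𝓝 0) (𝓝 a) := by
    simpa using tendsto_const_nhds.add ((tendsto_id (x := 𝓝 (0 : ℝ))).mul_const s)
  rcases ha.lt_or_gt with ha | ha
  · filter_upwards [hlim.eventually (eventually_lt_nhds ha)] with t ht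
    rw [abs_of_neg ht, abs_of_neg ha, sign_neg ha]
    simp only [SignType.coe_neg_one]
    ring
  · filter_upwards [hlim.eventually (eventually_gt_nhds ha)] with t ht
    rw [abs_of_pos ht, abs_of_pos ha, sign_pos ha]
    simp only [SignType.coe_one]
    ring

section V₁

variable {x ζ : ℝ × ℝ} (hζ : ζ ∈ viscositySubdiff2 (fun x => 2 * |x.1| + 2 * |x.2|) x)
include hζ

lemma fst_mul_abs_fst_of_mem_viscositySubdiff2_V₁ : ζ.1 * |x.1| = 2 * x.1 := by
  rcases eq_or_ne x.1 0 with h | h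
  · simp [h]
  have hslope (s : ℝ) (hs : s ≠ 0) : ζ.1 * s ≤ 2 * SignType.sign x.1 * s := by
    have := mul_add_mul_le_of_mem_viscositySubdiff2 (v := (s, 0))
      (c := 2 * SignType.sign x.1 * s) hζ (by simp [hs]) <|
        nhdsWithin_le_nhds <| (eventually_abs_add_mul_sub_abs h s).mono fun t ht => by
          simp only [Prod.fst_add, Prod.snd_add, Prod.smul_mk, smul_eq_mul, mul_zero, add_zero]
          linear_combination 2 * ht
    simpa using this
  have hζ₁ : ζ.1 = 2 * SignType.sign x.1 :=
    le_antisymm (by simpa using hslope 1 one_ne_zero) (by simpa using hslope (-1) (by norm_num))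
  rw [hζ₁, mul_assoc, sign_mul_abs]

lemma snd_mul_snd_of_mem_viscositySubdiff2_V₁ : ζ.2 * x.2 = 2 * |x.2| := by
  rcases eq_or_ne x.2 0 with h | h
  · simp [h]
  have hslope (s : ℝ) (hs : s ≠ 0) : ζ.2 * s ≤ 2 * SignType.sign x.2 * s := by
    have := mul_add_mul_le_of_mem_viscositySubdiff2 (v := (0, s))
      (c := 2 * SignType.sign x.2 * s) hζ (by simp [hs]) <|
        nhdsWithin_le_nhds <| (eventually_abs_add_mul_sub_abs h s).mono fun t ht => by
          simp only [Prod.fst_add, Prod.snd_add, Prod.smul_mk, smul_eq_mul, mul_zero, add_zero]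
          linear_combination 2 * ht
    simpa using this
  have hζ₂ : ζ.2 = 2 * SignType.sign x.2 :=
    le_antisymm (by simpa using hslope 1 one_ne_zero) (by simpa using hslope (-1) (by norm_num))
  rw [hζ₂, mul_assoc, sign_mul_self]

end V₁

theorem V₁_witnesses_gain_one :
    ∀ x : ℝ × ℝ, x ≠ 0 → ∀ u : ℝ × ℝ,
      ∀ ζ ∈ viscositySubdiff2 (fun x => 2 * |x.1| + 2 * |x.2|) x,
        ζ.1 * (F₁ x u).1 + ζ.2 * (F₁ x u).2 ≤
          -(x.1 ^ 2 + x.2 ^ 2) + (u.1 ^ 2 + u.2 ^ 2) := by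
  intro x _ u ζ hζ
  have h₁ := fst_mul_abs_fst_of_mem_viscositySubdiff2_V₁ hζ
  have h₂ := snd_mul_snd_of_mem_viscositySubdiff2_V₁ hζ
  have hF : ζ.1 * (F₁ x u).1 + ζ.2 * (F₁ x u).2 =
      2 * x.1 * (-x.1 + |x.2| + u.1) + 2 * |x.2| * (-x.1 - |x.2| + u.2) := by
    simp only [F₁, ← mul_assoc, h₁, h₂]
  rw [hF]
  nlinarith [sq_abs x.2, sq_nonneg (x.1 - u.1), sq_nonneg (|x.2| - u.2)]
end

section
/- Let V(x₁, x₂) = x₁² + |x₂|^{2/3} and h(x, u) = (u₁ - x₁, 3|x₂|^{4/3}(u₂ - x₂)). Then for all x ∈ ℝ², u ∈ ℝ², and all viscosity subgradients ζ ∈ ∂_D V(x), one has ζ · h(x, u) ≤ |u|² - |x|². -/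
open Topology Filter

lemma subdiff_deriv_eq {f : ℝ → ℝ} {c d : ℝ} (hf : HasDerivAt f d 0)
    (h : ∀ ε > (0:ℝ), ∀ᶠ t in 𝓝[≠] (0:ℝ), f t - f 0 - c * t ≥ -ε * |t|) : c = d := by
  have hslope : Tendsto (slope f 0) (𝓝[≠] (0:ℝ)) (𝓝 d) := hasDerivAt_iff_tendsto_slope.mp hf
  have hsub : 𝓝[>] (0:ℝ) ≤ 𝓝[≠] 0 := nhdsWithin_mono _ fun t ht => ne_of_gt ht
  have hsub' : 𝓝[<] (0:ℝ) ≤ 𝓝[≠] 0 := nhdsWithin_mono _ fun t ht => ne_of_lt ht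
  have hle : ∀ ε > (0:ℝ), c ≤ d + ε := by
    intro ε hε
    have h1 : ∀ᶠ t in 𝓝[>] (0:ℝ), c - ε ≤ slope f 0 t := by
      filter_upwards [(h ε hε).filter_mono hsub, self_mem_nhdsWithin] with t ht ht0
      have ht0 : (0:ℝ) < t := ht0
      rw [slope_def_field, sub_zero]
      rw [ge_iff_le, abs_of_pos ht0] at ht
      rw [le_div_iff₀ ht0]
      nlinarith
    have := ge_of_tendsto (hslope.mono_left hsub) h1
    linarith
  have hge : ∀ ε > (0:ℝ), d ≤ c + ε := by
    intro ε hε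
    have h1 : ∀ᶠ t in 𝓝[<] (0:ℝ), slope f 0 t ≤ c + ε := by
      filter_upwards [(h ε hε).filter_mono hsub', self_mem_nhdsWithin] with t ht ht0
      have ht0 : t < (0:ℝ) := ht0
      rw [slope_def_field, sub_zero]
      rw [ge_iff_le, abs_of_neg ht0] at ht
      rw [div_le_iff_of_neg ht0]
      nlinarith
    have := le_of_tendsto (hslope.mono_left hsub') h1
    linarith
  have h1 : c ≤ d := le_of_forall_pos_le_add fun ε hε => hle ε hε
  have h2 : d ≤ c := le_of_forall_pos_le_add fun ε hε => hge ε hε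
  linarith

theorem V2_dissipation_for_h :
    ∀ x u : ℝ × ℝ,
      ∀ ζ ∈ viscositySubdiff2 (fun x => x.1 ^ 2 + |x.2| ^ ((2 : ℝ) / 3)) x,
        ζ.1 * (u.1 - x.1) + ζ.2 * (3 * |x.2| ^ ((4 : ℝ) / 3) * (u.2 - x.2)) ≤
          (u.1 ^ 2 + u.2 ^ 2) - (x.1 ^ 2 + x.2 ^ 2) := by
  intro x u ζ hζ
  simp only [viscositySubdiff2, Set.mem_setOf_eq] at hζ
  -- maps along the axes
  have hj1 : Tendsto (fun t : ℝ => ((t, 0) : ℝ × ℝ)) (𝓝[≠] 0) (𝓝[≠] (0:ℝ×ℝ)) := by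
    rw [tendsto_nhdsWithin_iff]
    refine ⟨((continuous_id.prodMk continuous_const).tendsto' 0 (0,0) rfl).mono_left
        nhdsWithin_le_nhds, ?_⟩
    filter_upwards [self_mem_nhdsWithin] with t ht
    simp only [Set.mem_compl_iff, Set.mem_singleton_iff, Prod.mk_eq_zero, not_and]
    intro h; exact absurd h ht
  have hj2 : Tendsto (fun t : ℝ => ((0, t) : ℝ × ℝ)) (𝓝[≠] 0) (𝓝[≠] (0:ℝ×ℝ)) := by
    rw [tendsto_nhdsWithin_iff]
    refine ⟨((continuous_const.prodMk continuous_id).tendsto' 0 (0,0) rfl).mono_left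
        nhdsWithin_le_nhds, ?_⟩
    filter_upwards [self_mem_nhdsWithin] with t ht
    simp only [Set.mem_compl_iff, Set.mem_singleton_iff, Prod.mk_eq_zero, not_and]
    intro _ h; exact absurd h ht
  -- first coordinate of ζ
  have hζ1 : ζ.1 = 2 * x.1 := by
    have hd : HasDerivAt (fun t : ℝ => (x.1 + t)^2 + |x.2| ^ ((2:ℝ)/3)) (2 * x.1) 0 := by
      have h1 : HasDerivAt (fun t : ℝ => (x.1 + t)) 1 0 := (hasDerivAt_id 0).const_add x.1
      have := (h1.pow 2).add_const (|x.2| ^ ((2:ℝ)/3))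
      simpa using this
    apply subdiff_deriv_eq hd
    intro ε hε
    filter_upwards [hj1.eventually (hζ ε hε)] with t ht
    have hs : Real.sqrt (t^2 + 0^2) = |t| := by
      rw [show t^2 + (0:ℝ)^2 = t^2 by ring, Real.sqrt_sq_eq_abs]
    simp only [Prod.fst_add, Prod.snd_add, mul_zero, add_zero, hs] at ht
    simpa using ht
  have key : ζ.2 * (3 * |x.2| ^ ((4:ℝ)/3)) = 2 * x.2 := by
    rcases lt_trichotomy x.2 0 with hx | hx | hx
    · -- x.2 < 0
      have hpos : 0 < -x.2 := by linarith
      have hζ2 : ζ.2 = (2/3) * (-x.2) ^ ((2:ℝ)/3 - 1) * (-1) := by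
        have hinner : HasDerivAt (fun t : ℝ => -(x.2 + t)) (-1) 0 :=
          ((hasDerivAt_id 0).const_add x.2).neg
        have hrpow : HasDerivAt (fun y : ℝ => y ^ ((2:ℝ)/3))
            ((2/3) * (-(x.2 + 0)) ^ ((2:ℝ)/3 - 1)) (-(x.2 + 0)) :=
          Real.hasDerivAt_rpow_const (Or.inl (by simp; linarith))
        have hcomp := hrpow.comp 0 hinner
        have hev : (fun t : ℝ => x.1 ^ 2 + |x.2 + t| ^ ((2:ℝ)/3)) =ᶠ[𝓝 (0:ℝ)]
            (fun t : ℝ => x.1 ^ 2 + (-(x.2 + t)) ^ ((2:ℝ)/3)) := by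
          have hab : ∀ᶠ t in 𝓝 (0:ℝ), x.2 + t < 0 := by
            filter_upwards [eventually_abs_sub_lt 0 hpos] with t ht
            rw [sub_zero] at ht
            rcases abs_lt.mp ht with ⟨h1, h2⟩
            linarith
          filter_upwards [hab] with t ht
          rw [abs_of_neg ht]
        have hd0 : HasDerivAt (fun t : ℝ => x.1 ^ 2 + (-(x.2 + t)) ^ ((2:ℝ)/3))
            ((2/3) * (-x.2) ^ ((2:ℝ)/3 - 1) * (-1)) 0 := by
          have := hcomp.const_add (x.1 ^ 2)
          simpa using this
        have hd : HasDerivAt (fun t : ℝ => x.1 ^ 2 + |x.2 + t| ^ ((2:ℝ)/3))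
            ((2/3) * (-x.2) ^ ((2:ℝ)/3 - 1) * (-1)) 0 := hd0.congr_of_eventuallyEq hev
        apply subdiff_deriv_eq hd
        intro ε hε
        filter_upwards [hj2.eventually (hζ ε hε)] with t ht
        have hs : Real.sqrt ((0:ℝ)^2 + t^2) = |t| := by
          rw [show (0:ℝ)^2 + t^2 = t^2 by ring, Real.sqrt_sq_eq_abs]
        simp only [Prod.fst_add, Prod.snd_add, mul_zero, add_zero, zero_add, hs] at ht
        simpa using ht
      rw [hζ2, abs_of_neg hx]
      rw [show (2/3) * (-x.2) ^ ((2:ℝ)/3 - 1) * (-1) * (3 * (-x.2) ^ ((4:ℝ)/3)) =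
        -2 * ((-x.2) ^ ((2:ℝ)/3 - 1) * (-x.2) ^ ((4:ℝ)/3)) from by ring,
        ← Real.rpow_add hpos]
      norm_num
    · rw [hx]
      simp [Real.zero_rpow (by norm_num : (4:ℝ)/3 ≠ 0)]
    · -- 0 < x.2
      have hζ2 : ζ.2 = (2/3) * x.2 ^ ((2:ℝ)/3 - 1) := by
        have hinner : HasDerivAt (fun t : ℝ => x.2 + t) 1 0 := (hasDerivAt_id 0).const_add x.2
        have hrpow : HasDerivAt (fun y : ℝ => y ^ ((2:ℝ)/3))
            ((2/3) * (x.2 + 0) ^ ((2:ℝ)/3 - 1)) (x.2 + 0) :=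
          Real.hasDerivAt_rpow_const (Or.inl (by simp; linarith))
        have hcomp := hrpow.comp 0 hinner
        have hev : (fun t : ℝ => x.1 ^ 2 + |x.2 + t| ^ ((2:ℝ)/3)) =ᶠ[𝓝 (0:ℝ)]
            (fun t : ℝ => x.1 ^ 2 + (x.2 + t) ^ ((2:ℝ)/3)) := by
          have hab : ∀ᶠ t in 𝓝 (0:ℝ), 0 < x.2 + t := by
            filter_upwards [eventually_abs_sub_lt 0 hx] with t ht
            rw [sub_zero] at ht
            rcases abs_lt.mp ht with ⟨h1, h2⟩
            linarith
          filter_upwards [hab] with t ht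
          rw [abs_of_pos ht]
        have hd0 : HasDerivAt (fun t : ℝ => x.1 ^ 2 + (x.2 + t) ^ ((2:ℝ)/3))
            ((2/3) * x.2 ^ ((2:ℝ)/3 - 1)) 0 := by
          have := hcomp.const_add (x.1 ^ 2)
          simpa using this
        have hd : HasDerivAt (fun t : ℝ => x.1 ^ 2 + |x.2 + t| ^ ((2:ℝ)/3))
            ((2/3) * x.2 ^ ((2:ℝ)/3 - 1)) 0 := hd0.congr_of_eventuallyEq hev
        apply subdiff_deriv_eq hd
        intro ε hε
        filter_upwards [hj2.eventually (hζ ε hε)] with t ht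
        have hs : Real.sqrt ((0:ℝ)^2 + t^2) = |t| := by
          rw [show (0:ℝ)^2 + t^2 = t^2 by ring, Real.sqrt_sq_eq_abs]
        simp only [Prod.fst_add, Prod.snd_add, mul_zero, add_zero, zero_add, hs] at ht
        simpa using ht
      rw [hζ2, abs_of_pos hx]
      rw [show (2/3) * x.2 ^ ((2:ℝ)/3 - 1) * (3 * x.2 ^ ((4:ℝ)/3)) =
        2 * (x.2 ^ ((2:ℝ)/3 - 1) * x.2 ^ ((4:ℝ)/3)) from by ring,
        ← Real.rpow_add hx]
      norm_num
  have h2 : ζ.2 * (3 * |x.2| ^ ((4:ℝ)/3) * (u.2 - x.2)) = 2 * x.2 * (u.2 - x.2) := by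
    rw [show ζ.2 * (3 * |x.2| ^ ((4:ℝ)/3) * (u.2 - x.2)) =
      ζ.2 * (3 * |x.2| ^ ((4:ℝ)/3)) * (u.2 - x.2) from by ring, key]
  rw [h2, hζ1]
  nlinarith [sq_nonneg (u.1 - x.1), sq_nonneg (u.2 - x.2)]
end

section
/- Fix p > 2 and γ > 0. Let g(x) = (|x₁|x₂, -|x₂|x₁), g₀(x) = (-|x₁|x₁, -|x₂|x₂). There is no function V : ℝ² → ℝ≥0, continuous on ℝ² and continuously differentiable on ℝ² \ {0}, such that for all x ≠ 0 and all (u₁, u₂) ∈ ℝ²: ∇V(x) · (g₀(x) + |u₁|^p g(x) - |u₂|^p g(x)) ≤ -|x|² + γu₁² + γu₂². -/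
open Topology Filter

/-- The "L¹ harmonic oscillator" vector field. -/
def gOsc (x : ℝ × ℝ) : ℝ × ℝ := (|x.1| * x.2, -|x.2| * x.1)

/-- The dissipative drift vector field. -/
def gDrift (x : ℝ × ℝ) : ℝ × ℝ := (-|x.1| * x.1, -|x.2| * x.2)

/-! The control enters only through `|u₁|^p - |u₂|^p` times the oscillator, while its cost is
quadratic; as `p > 2`, sending either control to infinity shows that `V` must be constant along
the oscillator at every `x ≠ 0`. Near `(1, 0)` the oscillator is `t • (1, -1)` for `t > 0` and
`t • (1, 1)` for `t < 0`, so continuity of `∇V` forces `∇V(1, 0) = 0`, contradicting the strict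
decrease `∇V(x) · g₀(x) ≤ -|x|²` at `x = (1, 0)`. -/

theorem nonpos_of_forall_rpow_mul_le {p a c γ : ℝ} (hp : 2 < p)
    (h : ∀ t : ℝ, 0 < t → t ^ p * a ≤ c + γ * t ^ 2) : a ≤ 0 := by
  have hlim : Tendsto (fun t : ℝ => c * t ^ (-p) + γ * t ^ (-(p - 2))) atTop (𝓝 0) := by
    have := ((tendsto_rpow_neg_atTop (by linarith : 0 < p)).const_mul c).add
      ((tendsto_rpow_neg_atTop (by linarith : 0 < p - 2)).const_mul γ)
    rwa [mul_zero, mul_zero, add_zero] at this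
  refine ge_of_tendsto hlim ?_
  filter_upwards [eventually_gt_atTop 0] with t ht
  have htp : 0 < t ^ p := Real.rpow_pos_of_pos ht p
  have hsplit : c * t ^ (-p) + γ * t ^ (-(p - 2)) = (c + γ * t ^ 2) / t ^ p := by
    rw [neg_sub, Real.rpow_sub ht, Real.rpow_neg ht.le, Real.rpow_two]
    field_simp
  rw [hsplit, le_div_iff₀ htp, mul_comm]
  exact h t ht

theorem eq_zero_of_forall_rpow_mul_sub_le {p a b c γ : ℝ} (hp : 2 < p)
    (h : ∀ u : ℝ × ℝ, b + |u.1| ^ p * a - |u.2| ^ p * a ≤ c + γ * u.1 ^ 2 + γ * u.2 ^ 2) :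
    a = 0 := by
  have hzero : |(0 : ℝ)| ^ p = 0 := by rw [abs_zero, Real.zero_rpow (by linarith)]
  have hpos : a ≤ 0 := nonpos_of_forall_rpow_mul_le (c := c - b) (γ := γ) hp fun t ht => by
    have := h (t, 0)
    simp only [abs_of_pos ht, hzero] at this
    linarith
  have hneg : -a ≤ 0 := nonpos_of_forall_rpow_mul_le (c := c - b) (γ := γ) hp fun t ht => by
    have := h (0, t)
    simp only [abs_of_pos ht, hzero] at this
    linarith
  linarith

theorem gOsc_one_of_pos {t : ℝ} (ht : 0 < t) : gOsc (1, t) = t • (1, -1) := by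
  simp [gOsc, abs_of_pos ht]

theorem gOsc_one_of_neg {t : ℝ} (ht : t < 0) : gOsc (1, t) = t • (1, 1) := by
  simp [gOsc, abs_of_neg ht]

theorem continuous_fderiv_one_left {V : ℝ × ℝ → ℝ}
    (hV : ContDiffOn ℝ 1 V ({(0, 0)}ᶜ : Set (ℝ × ℝ))) :
    Continuous fun t : ℝ => fderiv ℝ V (1, t) :=
  (hV.continuousOn_fderiv_of_isOpen isOpen_compl_singleton le_rfl).comp_continuous
    (continuous_const.prodMk continuous_id) fun t => by simp

theorem eq_zero_of_continuous_of_mem_closure {X : Type*} [TopologicalSpace X] {f : X → ℝ}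
    {s : Set X} {a : X} (hf : Continuous f) (h : ∀ t ∈ s, f t = 0) (ha : a ∈ closure s) :
    f a = 0 :=
  (isClosed_eq hf continuous_const).closure_subset_iff.mpr h ha

theorem fderiv_one_zero_apply_eq_zero {V : ℝ × ℝ → ℝ}
    (hV : ContDiffOn ℝ 1 V ({(0, 0)}ᶜ : Set (ℝ × ℝ)))
    (hosc : ∀ x : ℝ × ℝ, x ≠ (0, 0) → fderiv ℝ V x (gOsc x) = 0) :
    fderiv ℝ V (1, 0) (1, 0) = 0 := by
  have hcont (v : ℝ × ℝ) : Continuous fun t : ℝ => fderiv ℝ V (1, t) v :=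
    (ContinuousLinearMap.apply ℝ ℝ v).continuous.comp (continuous_fderiv_one_left hV)
  have hminus : fderiv ℝ V (1, 0) (1, -1) = 0 := by
    refine eq_zero_of_continuous_of_mem_closure (f := fun t => fderiv ℝ V (1, t) (1, -1))
      (s := Set.Ioi 0) (hcont _) (fun t ht => ?_) (by simp)
    have := hosc (1, t) (by simp)
    rw [gOsc_one_of_pos ht, map_smul, smul_eq_mul] at this
    exact (mul_eq_zero.mp this).resolve_left ht.ne'
  have hplus : fderiv ℝ V (1, 0) (1, 1) = 0 := by
    refine eq_zero_of_continuous_of_mem_closure (f := fun t => fderiv ℝ V (1, t) (1, 1))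
      (s := Set.Iio 0) (hcont _) (fun t ht => ?_) (by simp)
    have := hosc (1, t) (by simp)
    rw [gOsc_one_of_neg ht, map_smul, smul_eq_mul] at this
    exact (mul_eq_zero.mp this).resolve_left ht.ne
  have hsum : fderiv ℝ V (1, 0) (1, 0) =
      2⁻¹ * (fderiv ℝ V (1, 0) (1, -1) + fderiv ℝ V (1, 0) (1, 1)) := by
    rw [← map_add, ← smul_eq_mul, ← map_smul]
    norm_num
  rw [hsum, hminus, hplus, add_zero, mul_zero]

theorem no_C1_storage_for_Sigma_p_general (p γ : ℝ) (hp : 2 < p) :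
    ¬ ∃ V : ℝ × ℝ → ℝ, Continuous V ∧ (∀ x, 0 ≤ V x) ∧
      ContDiffOn ℝ 1 V ({(0, 0)}ᶜ : Set (ℝ × ℝ)) ∧
      ∀ x : ℝ × ℝ, x ≠ (0, 0) → ∀ u : ℝ × ℝ,
        fderiv ℝ V x (gDrift x + |u.1| ^ p • gOsc x - |u.2| ^ p • gOsc x) ≤
          -(x.1 ^ 2 + x.2 ^ 2) + γ * u.1 ^ 2 + γ * u.2 ^ 2 := by
  rintro ⟨V, -, -, hV, hdiss⟩
  have hosc (x : ℝ × ℝ) (hx : x ≠ (0, 0)) : fderiv ℝ V x (gOsc x) = 0 :=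
    eq_zero_of_forall_rpow_mul_sub_le hp fun u => by
      simpa only [map_sub, map_add, map_smul, smul_eq_mul] using hdiss x hx u
  have hdrift : gDrift (1, 0) = -(1, 0) := by norm_num [gDrift]
  have := hdiss (1, 0) (by simp) 0
  rw [Prod.fst_zero, Prod.snd_zero, abs_zero, Real.zero_rpow (by linarith), zero_smul,
    add_zero, sub_zero, hdrift, map_neg, fderiv_one_zero_apply_eq_zero hV hosc] at this
  norm_num at this

theorem no_C1_storage_for_Sigma_p (p γ : ℝ) (hp : 2 < p) (hγ : 0 < γ) :
    ¬ ∃ V : ℝ × ℝ → ℝ, Continuous V ∧ (∀ x, 0 ≤ V x) ∧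
      ContDiffOn ℝ 1 V ({(0, 0)}ᶜ : Set (ℝ × ℝ)) ∧
      ∀ x : ℝ × ℝ, x ≠ (0, 0) → ∀ u : ℝ × ℝ,
        fderiv ℝ V x (gDrift x + |u.1| ^ p • gOsc x - |u.2| ^ p • gOsc x) ≤
          -(x.1 ^ 2 + x.2 ^ 2) + γ * u.1 ^ 2 + γ * u.2 ^ 2 :=
  no_C1_storage_for_Sigma_p_general p γ hp
end

section
/- Let V : ℝ² → ℝ be C¹ on ℝ² \ {0} and suppose ∇V(ξ) · g(ξ) = 0 for all ξ ≠ 0, where g(x) = (|x₁|x₂, -|x₂|x₁). Then for every a > 0, ∇V(a, 0) = (0, 0). -/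
/-!
Fix `a > 0`. On the half-line `{(a, t) : t > 0}` the field `gOsc` points along `(1, -1)`, and on
`{(a, t) : t < 0}` along `(1, 1)`; so the derivative of `V` kills `(1, -1)` just above the
axis and `(1, 1)` just below it. Continuity of `fderiv ℝ V` at `(a, 0)` carries both
identities to the axis, and `(1, 1)`, `(1, -1)` span `ℝ²`.
-/

open Topology Filter

theorem gOsc_of_pos_of_pos {a t : ℝ} (ha : 0 < a) (ht : 0 < t) :
    gOsc (a, t) = (a * t) • ((1 : ℝ), (-1 : ℝ)) := by
  simp [gOsc, abs_of_pos ha, abs_of_pos ht, mul_comm]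

theorem gOsc_of_pos_of_neg {a t : ℝ} (ha : 0 < a) (ht : t < 0) :
    gOsc (a, t) = (a * t) • ((1 : ℝ), (1 : ℝ)) := by
  simp [gOsc, abs_of_pos ha, abs_of_neg ht, mul_comm]

theorem ContinuousAt.eq_of_eventually_eq {X Y : Type*} [TopologicalSpace X] [TopologicalSpace Y]
    [T2Space Y] {f : X → Y} {x : X} {l : Filter X} [l.NeBot] {c : Y} (hf : ContinuousAt f x)
    (hl : l ≤ 𝓝 x) (h : ∀ᶠ y in l, f y = c) : f x = c :=
  tendsto_nhds_unique (hf.tendsto.mono_left hl)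
    (tendsto_const_nhds.congr' (h.mono fun _ hy ↦ hy.symm))

theorem ContinuousLinearMap.eq_zero_of_apply_one_one_of_apply_one_neg_one {M : Type*}
    [TopologicalSpace M] [AddCommGroup M] [Module ℝ M] (L : ℝ × ℝ →L[ℝ] M)
    (h_one : L (1, 1) = 0) (h_neg_one : L (1, -1) = 0) : L = 0 := by
  refine ContinuousLinearMap.ext fun v ↦ ?_
  have hv : v = ((v.1 + v.2) / 2) • ((1 : ℝ), (1 : ℝ))
      + ((v.1 - v.2) / 2) • ((1 : ℝ), (-1 : ℝ)) := by
    ext <;> simp <;> ring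
  rw [hv, map_add, map_smul, map_smul, h_one, h_neg_one, smul_zero, smul_zero, add_zero,
    zero_apply]

theorem gradient_vanishes_on_axis (V : ℝ × ℝ → ℝ)
    (hVC1 : ContDiffOn ℝ 1 V ({(0, 0)}ᶜ : Set (ℝ × ℝ)))
    (horth : ∀ ξ : ℝ × ℝ, ξ ≠ (0, 0) → fderiv ℝ V ξ (gOsc ξ) = 0) :
    ∀ a : ℝ, 0 < a → fderiv ℝ V (a, 0) = 0 := by
  intro a ha
  have hne : ∀ t, ((a, t) : ℝ × ℝ) ≠ (0, 0) := fun t h ↦ ha.ne' (congrArg Prod.fst h)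
  have hcont : ContinuousAt (fun t : ℝ ↦ fderiv ℝ V (a, t)) 0 :=
    ((hVC1.continuousOn_fderiv_of_isOpen isOpen_compl_singleton le_rfl).continuousAt
      (isOpen_compl_singleton.mem_nhds (hne 0))).comp (Continuous.prodMk_right a).continuousAt
  have hcont_apply (v : ℝ × ℝ) : ContinuousAt (fun t : ℝ ↦ fderiv ℝ V (a, t) v) 0 :=
    (ContinuousLinearMap.apply ℝ ℝ v).continuous.continuousAt.comp hcont
  have h_below : ∀ᶠ t in 𝓝[<] (0 : ℝ), fderiv ℝ V (a, t) (1, 1) = 0 := by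
    filter_upwards [self_mem_nhdsWithin] with t (ht : t < 0)
    have := horth _ (hne t)
    rwa [gOsc_of_pos_of_neg ha ht, map_smul, smul_eq_zero,
      or_iff_right (mul_ne_zero ha.ne' ht.ne)] at this
  have h_above : ∀ᶠ t in 𝓝[>] (0 : ℝ), fderiv ℝ V (a, t) (1, -1) = 0 := by
    filter_upwards [self_mem_nhdsWithin] with t (ht : 0 < t)
    have := horth _ (hne t)
    rwa [gOsc_of_pos_of_pos ha ht, map_smul, smul_eq_zero,
      or_iff_right (mul_pos ha ht).ne'] at this
  exact ContinuousLinearMap.eq_zero_of_apply_one_one_of_apply_one_neg_one _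
    ((hcont_apply _).eq_of_eventually_eq nhdsWithin_le_nhds h_below)
    ((hcont_apply _).eq_of_eventually_eq nhdsWithin_le_nhds h_above)
end

section
/- Let f : ℝ × ℝ → ℝ be defined by f(x, u) = (|u| + x)·ψ(x, |u|) for x ≥ 0 and f(x,u) = x² + |u|·ψ(0, |u|) for x < 0, where ψ(a,b) = (1/2)[φ(b-a, b+a-2) + (b-a)] and φ(s,t) = sign(s)·max{min{(|s|-t)/2, |s|}, 0}. Let V₃(x) = max{|x|, 2x - 1}. Then V₃ witnesses gain 1 for ẋ = f(x,u): for all x ≠ 0, all u ∈ ℝ, and all ζ ∈ ∂_D V₃(x), ζ·f(x,u) ≤ u² - x². -/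
open Topology Filter

/-- The viscosity subdifferential of `V : ℝ → ℝ` at `x`. -/
def viscositySubdiff1 (V : ℝ → ℝ) (x : ℝ) : Set ℝ :=
  {ζ | ∀ ε > (0 : ℝ), ∀ᶠ h in 𝓝[≠] (0 : ℝ),
      V (x + h) - V x - ζ * h ≥ -ε * |h|}

/-- The gluing function `φ`. -/
noncomputable def phi (s t : ℝ) : ℝ :=
  Real.sign s * max (min ((|s| - t) / 2) |s|) 0

/-- The function `ψ`. -/
noncomputable def psi (a b : ℝ) : ℝ :=
  (phi (b - a) (b + a - 2) + (b - a)) / 2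

/-- The right-hand side of system `Σ₃`. -/
noncomputable def f₃ (x u : ℝ) : ℝ :=
  if 0 ≤ x then (|u| + x) * psi x |u| else x ^ 2 + |u| * psi 0 |u|

/-!
A viscosity subgradient of `V₃` at `x` lies between the left and right derivatives of `V₃`
there, so `ζ = -1, 1, 2` on `x < 0`, `0 < x < 1`, `x > 1`, and `ζ ∈ [1, 2]` at `x = 1`.
With `b = |u|` and `u² - x² = (b + x)(b - x)`, the bounds on `f₃` for `x ≥ 0` reduce to the sign
of `φ(b - x, b + x - 2) - (b - x)` (nonpositive when `x ≤ 1`) and of `φ(b - x, b + x - 2)`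
(nonpositive when `x ≥ 1`): `f₃ ≤ u² - x²` on `[0, 1]` and `f₃ ≤ (u² - x²) / 2` on `[1, ∞)`.
At the kink `x = 1` both bounds are needed: `ζ f₃ ≤ f₃` if `f₃ ≤ 0`, and `ζ f₃ ≤ 2 f₃` otherwise.
-/

open Set

section ViscositySubdiff

variable {V : ℝ → ℝ} {x ζ m : ℝ}

theorem tendsto_const_add_nhdsGT (x : ℝ) :
    Tendsto (x + ·) (𝓝[>] 0) (𝓝[>] x) :=
  tendsto_nhdsWithin_of_tendsto_nhds_of_eventually_within _
    (((continuous_const_add x).tendsto' 0 x (add_zero x)).mono_left nhdsWithin_le_nhds)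
    (eventually_nhdsWithin_of_forall fun _ ht => lt_add_of_pos_right x ht)

theorem tendsto_const_add_nhdsLT (x : ℝ) :
    Tendsto (x + ·) (𝓝[<] 0) (𝓝[<] x) :=
  tendsto_nhdsWithin_of_tendsto_nhds_of_eventually_within _
    (((continuous_const_add x).tendsto' 0 x (add_zero x)).mono_left nhdsWithin_le_nhds)
    (eventually_nhdsWithin_of_forall fun _ ht => add_lt_of_neg_right x ht)

theorem le_of_mem_viscositySubdiff1_of_hasDerivWithinAt_Ioi
    (hζ : ζ ∈ viscositySubdiff1 V x) (hV : HasDerivWithinAt V m (Ioi x) x) : ζ ≤ m := by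
  refine le_of_forall_pos_le_add fun ε hε => ?_
  have hslope : Tendsto (fun t => slope V x (x + t)) (𝓝[>] 0) (𝓝 m) :=
    ((hasDerivWithinAt_iff_tendsto_slope' self_notMem_Ioi).mp hV).comp (tendsto_const_add_nhdsGT x)
  refine sub_le_iff_le_add.mp (ge_of_tendsto hslope ?_)
  filter_upwards [(hζ ε hε).filter_mono (nhdsGT_le_nhdsNE 0), self_mem_nhdsWithin]
    with t ht (htpos : 0 < t)
  rw [slope_def_field, add_sub_cancel_left, le_div_iff₀ htpos]
  rw [abs_of_pos htpos] at ht
  linarith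

theorem ge_of_mem_viscositySubdiff1_of_hasDerivWithinAt_Iio
    (hζ : ζ ∈ viscositySubdiff1 V x) (hV : HasDerivWithinAt V m (Iio x) x) : m ≤ ζ := by
  refine le_of_forall_pos_le_add fun ε hε => ?_
  have hslope : Tendsto (fun t => slope V x (x + t)) (𝓝[<] 0) (𝓝 m) :=
    ((hasDerivWithinAt_iff_tendsto_slope' self_notMem_Iio).mp hV).comp (tendsto_const_add_nhdsLT x)
  refine le_of_tendsto hslope ?_
  filter_upwards [(hζ ε hε).filter_mono (nhdsLT_le_nhdsNE 0), self_mem_nhdsWithin]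
    with t ht (htneg : t < 0)
  rw [slope_def_field, add_sub_cancel_left, div_le_iff_of_neg htneg]
  rw [abs_of_neg htneg] at ht
  linarith

theorem eq_of_mem_viscositySubdiff1_of_hasDerivAt
    (hζ : ζ ∈ viscositySubdiff1 V x) (hV : HasDerivAt V m x) : ζ = m :=
  le_antisymm (le_of_mem_viscositySubdiff1_of_hasDerivWithinAt_Ioi hζ hV.hasDerivWithinAt)
    (ge_of_mem_viscositySubdiff1_of_hasDerivWithinAt_Iio hζ hV.hasDerivWithinAt)

end ViscositySubdiff

def V₃ (x : ℝ) : ℝ := max |x| (2 * x - 1)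

theorem V₃_of_le_one {y : ℝ} (hy : y ≤ 1) : V₃ y = |y| :=
  max_eq_left (by linarith [le_abs_self y])

theorem V₃_of_one_le {y : ℝ} (hy : 1 ≤ y) : V₃ y = 2 * y - 1 :=
  max_eq_right (by rw [abs_of_nonneg (by linarith)]; linarith)

theorem V₃_of_nonpos {y : ℝ} (hy : y ≤ 0) : V₃ y = -y := by
  rw [V₃_of_le_one (by linarith), abs_of_nonpos hy]

theorem V₃_of_mem_Icc {y : ℝ} (hy : y ∈ Icc 0 1) : V₃ y = y := by
  rw [V₃_of_le_one hy.2, abs_of_nonneg hy.1]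

theorem hasDerivAt_V₃_of_neg {x : ℝ} (hx : x < 0) : HasDerivAt V₃ (-1) x :=
  (hasDerivAt_neg x).congr_of_eventuallyEq <|
    eventually_of_mem (Iio_mem_nhds hx) fun _ hy => V₃_of_nonpos (le_of_lt hy)

theorem hasDerivAt_V₃_of_mem_Ioo {x : ℝ} (hx : x ∈ Ioo 0 1) : HasDerivAt V₃ 1 x :=
  (hasDerivAt_id x).congr_of_eventuallyEq <|
    eventually_of_mem (Ioo_mem_nhds hx.1 hx.2) fun _ hy => V₃_of_mem_Icc (Ioo_subset_Icc_self hy)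

theorem hasDerivAt_V₃_of_one_lt {x : ℝ} (hx : 1 < x) : HasDerivAt V₃ 2 x := by
  have hlin : HasDerivAt (fun y => 2 * y - 1) 2 x := by
    simpa using ((hasDerivAt_id x).const_mul 2).sub_const 1
  exact hlin.congr_of_eventuallyEq <|
    eventually_of_mem (Ioi_mem_nhds hx) fun _ hy => V₃_of_one_le (le_of_lt hy)

theorem hasDerivWithinAt_V₃_one_Iio : HasDerivWithinAt V₃ 1 (Iio 1) 1 :=
  (hasDerivAt_id (1 : ℝ)).hasDerivWithinAt.congr_of_eventuallyEq
    (eventually_of_mem (Ioo_mem_nhdsLT zero_lt_one) fun _ hy =>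
      V₃_of_mem_Icc (Ioo_subset_Icc_self hy)) (V₃_of_mem_Icc ⟨zero_le_one, le_rfl⟩)

theorem hasDerivWithinAt_V₃_one_Ioi : HasDerivWithinAt V₃ 2 (Ioi 1) 1 := by
  have hlin : HasDerivAt (fun y => 2 * y - 1) 2 (1 : ℝ) := by
    simpa using ((hasDerivAt_id (1 : ℝ)).const_mul 2).sub_const 1
  exact hlin.hasDerivWithinAt.congr (fun _ hy => V₃_of_one_le (le_of_lt hy))
    (V₃_of_one_le le_rfl)

section Phi

variable {s t : ℝ}

theorem phi_zero_left (t : ℝ) : phi 0 t = 0 := by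
  simp [phi]

theorem phi_of_pos (hs : 0 < s) : phi s t = max (min ((s - t) / 2) s) 0 := by
  rw [phi, Real.sign_of_pos hs, abs_of_pos hs, one_mul]

theorem phi_of_neg (hs : s < 0) : phi s t = -max (min ((-s - t) / 2) (-s)) 0 := by
  rw [phi, Real.sign_of_neg hs, abs_of_neg hs, neg_one_mul]

theorem phi_nonneg (hs : 0 ≤ s) : 0 ≤ phi s t := by
  rcases hs.eq_or_lt with rfl | hs
  · rw [phi_zero_left]
  · rw [phi_of_pos hs]
    exact le_max_right _ _

theorem phi_le_of_le (h : t ≤ s) : phi s t ≤ s := by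
  rcases lt_trichotomy s 0 with hs | rfl | hs
  · rw [phi_of_neg hs, min_eq_right (by linarith), max_eq_left (by linarith), neg_neg]
  · rw [phi_zero_left]
  · rw [phi_of_pos hs]
    exact max_le (min_le_right _ _) hs.le

theorem phi_nonpos_of_le (h : s ≤ t) : phi s t ≤ 0 := by
  rcases lt_trichotomy s 0 with hs | rfl | hs
  · rw [phi_of_neg hs, neg_nonpos]
    exact le_max_right _ _
  · rw [phi_zero_left]
  · rw [phi_of_pos hs, max_eq_right (min_le_of_left_le (by linarith))]

end Phi

theorem psi_le_sub {a : ℝ} (ha : a ≤ 1) (b : ℝ) : psi a b ≤ b - a := by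
  have := phi_le_of_le (show b + a - 2 ≤ b - a by linarith)
  rw [psi]
  linarith

theorem psi_le_half_sub {a : ℝ} (ha : 1 ≤ a) (b : ℝ) : psi a b ≤ (b - a) / 2 := by
  have := phi_nonpos_of_le (show b - a ≤ b + a - 2 by linarith)
  rw [psi]
  linarith

theorem psi_zero_nonneg {b : ℝ} (hb : 0 ≤ b) : 0 ≤ psi 0 b := by
  have := phi_nonneg (t := b + 0 - 2) (show 0 ≤ b - 0 by linarith)
  rw [psi]
  linarith

section F₃

variable {x : ℝ} (u : ℝ)

theorem f₃_of_nonneg (hx : 0 ≤ x) : f₃ x u = (|u| + x) * psi x |u| :=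
  if_pos hx

theorem f₃_le_sq_sub_sq (hx₀ : 0 ≤ x) (hx₁ : x ≤ 1) : f₃ x u ≤ u ^ 2 - x ^ 2 :=
  calc f₃ x u = (|u| + x) * psi x |u| := f₃_of_nonneg u hx₀
    _ ≤ (|u| + x) * (|u| - x) := by gcongr; exact psi_le_sub hx₁ _
    _ = u ^ 2 - x ^ 2 := by rw [← sq_abs u]; ring

theorem f₃_le_half_sq_sub_sq (hx : 1 ≤ x) : f₃ x u ≤ (u ^ 2 - x ^ 2) / 2 :=
  calc f₃ x u = (|u| + x) * psi x |u| := f₃_of_nonneg u (by linarith)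
    _ ≤ (|u| + x) * ((|u| - x) / 2) := by gcongr; exact psi_le_half_sub hx _
    _ = (u ^ 2 - x ^ 2) / 2 := by rw [← sq_abs u]; ring

theorem sq_le_f₃_of_neg (hx : x < 0) : x ^ 2 ≤ f₃ x u := by
  rw [f₃, if_neg hx.not_ge]
  have := mul_nonneg (abs_nonneg u) (psi_zero_nonneg (abs_nonneg u))
  linarith

end F₃

theorem V3_witnesses_gain_one :
    ∀ x : ℝ, x ≠ 0 → ∀ u : ℝ,
      ∀ ζ ∈ viscositySubdiff1 (fun x => max |x| (2 * x - 1)) x,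
        ζ * f₃ x u ≤ u ^ 2 - x ^ 2 := by
  intro x hx u ζ (hζ : ζ ∈ viscositySubdiff1 V₃ x)
  rcases hx.lt_or_gt with hneg | hpos
  · rw [eq_of_mem_viscositySubdiff1_of_hasDerivAt hζ (hasDerivAt_V₃_of_neg hneg)]
    linarith [sq_le_f₃_of_neg u hneg, sq_nonneg u]
  rcases lt_trichotomy x 1 with hlt | rfl | hgt
  · rw [eq_of_mem_viscositySubdiff1_of_hasDerivAt hζ (hasDerivAt_V₃_of_mem_Ioo ⟨hpos, hlt⟩),
      one_mul]
    exact f₃_le_sq_sub_sq u hpos.le hlt.le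
  · have hζ₁ := ge_of_mem_viscositySubdiff1_of_hasDerivWithinAt_Iio hζ hasDerivWithinAt_V₃_one_Iio
    have hζ₂ := le_of_mem_viscositySubdiff1_of_hasDerivWithinAt_Ioi hζ hasDerivWithinAt_V₃_one_Ioi
    have h₁ := f₃_le_sq_sub_sq u zero_le_one le_rfl
    have h₂ := f₃_le_half_sq_sub_sq u le_rfl
    rcases le_total (f₃ 1 u) 0 with hf | hf <;> nlinarith
  · rw [eq_of_mem_viscositySubdiff1_of_hasDerivAt hζ (hasDerivAt_V₃_of_one_lt hgt)]
    linarith [f₃_le_half_sq_sub_sq u hgt.le]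
end
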